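/- For every h ∈ (0, 1/2) and every α ∈ (0, 2h) there exists ρ* > ρ_h(α) such that H_α^h(ρ) < H_{2h}^h(ρ) for all ρ ∈ [ρ_h(α), ρ*), H_α^h(ρ*) = H_{2h}^h(ρ*), and H_α^h(ρ) > H_{2h}^h(ρ) for all ρ > ρ* (i.e. the rotational surfaces H_α^h and the entire graph S^h = H_{2h}^h intersect in a circle; inside this circle H_α^h < S^h and outside the opposite inequality holds). -/

import Mathlib

open Real Set Filter MeasureTheory

/-- Inverse hyperbolic cosine. -/
noncomputable def arcosh (x : ℝ) : ℝ := Real.log (x + Real.sqrt (x ^ 2 - 1))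

/-- The root `φ(h,α)` of the quadratic `(s² − 1) − (2hs − α)²`. -/
noncomputable def phi (h α : ℝ) : ℝ :=
  (-2 * α * h + Real.sqrt (1 - 4 * h ^ 2 + α ^ 2)) / (1 - 4 * h ^ 2)

/-- The negative root `b(h,α)` of the quadratic `(s² − 1) − (2hs − α)²`. -/
noncomputable def bb (h α : ℝ) : ℝ :=
  -(2 * h * α + Real.sqrt (1 - 4 * h ^ 2 + α ^ 2)) / (1 - 4 * h ^ 2)

/-- The radius `ρ_h(α)` of the base circle of the rotational cmc `h` surface `H_α^h`. -/
noncomputable def rho (h α : ℝ) : ℝ := _root_.arcosh (phi h α)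

/-- The derivative `u_α^h` of the profile function of `H_α^h`. -/
noncomputable def uu (h α ρ : ℝ) : ℝ :=
  (-α + 2 * h * Real.cosh ρ) /
    Real.sqrt (Real.sinh ρ ^ 2 - (-α + 2 * h * Real.cosh ρ) ^ 2)

/-- The profile function `H_α^h` of the rotational cmc `h` surfaces of Sa Earp–Toubiana. -/
noncomputable def HH (h α ρ : ℝ) : ℝ := ∫ w in rho h α..ρ, uu h α w

/-! Let `F = H_α^h - S^h` on `[ρ_h(α), ∞)`. Pointwise `u_α^h > u_{2h}^h`, so `F` is strictly
increasing, and `F(ρ_h(α)) = -S^h(ρ_h(α)) < 0`. To see that `F` becomes nonnegative, substitute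
`t = cosh ρ`: the profile `H_α^h` becomes the integral from `φ(h,α)` of
`(2ht - α) / (√(t² - 1) √Q_α(t))`, where `Q_α(t) = t² - 1 - (2ht - α)²` vanishes at `φ(h,α)`.
With `λ = √(1 - 4h² + α²)` one has `Q_α(λτ + φ - λ) = λ² Q_{2h}(τ)`, and pulling the integrand
of `H_α^h` back along `τ ↦ λτ + φ - λ` dominates the integrand of `S^h`. As `λ < 1` the map
lies below the identity far out, whence `S^h ≤ H_α^h` at some radius; the intermediate value
theorem then yields `ρ*`. -/

noncomputable def lam (h α : ℝ) : ℝ := √(1 - 4 * h ^ 2 + α ^ 2)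

section Algebra

variable {h α : ℝ}

lemma lam_sq (hd : 0 < 1 - 4 * h ^ 2) : lam h α ^ 2 = 1 - 4 * h ^ 2 + α ^ 2 :=
  Real.sq_sqrt (by positivity)

lemma lam_pos (hd : 0 < 1 - 4 * h ^ 2) : 0 < lam h α :=
  Real.sqrt_pos.2 (by positivity)

lemma lam_lt_one (hα0 : 0 ≤ α) (hα : α < 2 * h) : lam h α < 1 :=
  (Real.sqrt_lt' one_pos).2 (by nlinarith)

lemma mul_phi (hd : 0 < 1 - 4 * h ^ 2) : (1 - 4 * h ^ 2) * phi h α = lam h α - 2 * α * h := by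
  rw [phi, mul_div_cancel₀ _ hd.ne', lam]
  ring

lemma phi_sub_bb : phi h α - bb h α = 2 * lam h α / (1 - 4 * h ^ 2) := by
  rw [phi, bb, lam]
  ring

lemma bb_lt_phi (hd : 0 < 1 - 4 * h ^ 2) : bb h α < phi h α := by
  have := phi_sub_bb (h := h) (α := α)
  have : 0 < 2 * lam h α / (1 - 4 * h ^ 2) := div_pos (mul_pos two_pos (lam_pos hd)) hd
  linarith

lemma quadratic_eq_mul (hd : 0 < 1 - 4 * h ^ 2) (t : ℝ) :
    t ^ 2 - 1 - (2 * h * t - α) ^ 2 = (1 - 4 * h ^ 2) * ((t - phi h α) * (t - bb h α)) := by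
  have hφ : (1 - 4 * h ^ 2) * (t - phi h α) = (1 - 4 * h ^ 2) * t - (lam h α - 2 * α * h) := by
    rw [mul_sub, mul_phi hd]
  have hb : (1 - 4 * h ^ 2) * (t - bb h α) = (1 - 4 * h ^ 2) * t + (2 * h * α + lam h α) := by
    rw [bb, mul_sub, mul_div_cancel₀ _ hd.ne', lam]
    ring
  refine mul_left_cancel₀ hd.ne' ?_
  rw [← mul_assoc, mul_mul_mul_comm, hφ, hb]
  linear_combination lam_sq (α := α) hd

lemma phi_two_mul (hd : 0 < 1 - 4 * h ^ 2) : phi h (2 * h) = 1 := by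
  rw [phi, show 1 - 4 * h ^ 2 + (2 * h) ^ 2 = 1 by ring, Real.sqrt_one, div_eq_one_iff_eq hd.ne']
  ring

lemma bb_two_mul : bb h (2 * h) = -(1 + 4 * h ^ 2) / (1 - 4 * h ^ 2) := by
  rw [bb, show 1 - 4 * h ^ 2 + (2 * h) ^ 2 = 1 by ring, Real.sqrt_one]
  ring

lemma one_le_phi (hd : 0 < 1 - 4 * h ^ 2) (hα0 : 0 ≤ α) (hα : α ≤ 2 * h) : 1 ≤ phi h α := by
  rw [phi, le_div_iff₀ hd, one_mul, ← lam]
  -- `λ² - (1 - 4h² + 2αh)² = (1 - 4h²)(2h - α)²`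
  have : 1 - 4 * h ^ 2 + 2 * α * h ≤ lam h α :=
    (Real.le_sqrt (by nlinarith) (by positivity)).2
      (by nlinarith [mul_nonneg hd.le (sq_nonneg (2 * h - α))])
  linarith

lemma one_lt_phi (hd : 0 < 1 - 4 * h ^ 2) (hα0 : 0 ≤ α) (hα : α < 2 * h) : 1 < phi h α := by
  rw [phi, lt_div_iff₀ hd, one_mul, ← lam]
  have : 1 - 4 * h ^ 2 + 2 * α * h < lam h α :=
    (Real.lt_sqrt (by nlinarith)).2
      (by nlinarith [mul_pos hd (pow_pos (sub_pos.2 hα) 2)])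
  linarith

lemma le_two_mul_mul_lam (hd : 0 < 1 - 4 * h ^ 2) (hα0 : 0 ≤ α) (hα : α ≤ 2 * h) :
    α ≤ 2 * h * lam h α := by
  refine (pow_le_pow_iff_left₀ hα0 (mul_nonneg (by linarith) (lam_pos hd).le) two_ne_zero).1 ?_
  rw [mul_pow, lam_sq hd]
  nlinarith [mul_nonneg hd.le (mul_nonneg (sub_nonneg.2 hα) (by linarith : 0 ≤ 2 * h + α))]

lemma le_two_mul_mul_phi (hd : 0 < 1 - 4 * h ^ 2) (hα0 : 0 ≤ α) (hα : α ≤ 2 * h) :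
    α ≤ 2 * h * phi h α := by
  nlinarith [mul_phi (α := α) hd, le_two_mul_mul_lam hd hα0 hα]

lemma le_two_mul_mul_of_phi_le (hd : 0 < 1 - 4 * h ^ 2) (hα0 : 0 ≤ α) (hα : α ≤ 2 * h) {t : ℝ}
    (ht : phi h α ≤ t) : α ≤ 2 * h * t := by
  nlinarith [le_two_mul_mul_phi hd hα0 hα, mul_nonneg (by linarith : 0 ≤ h) (sub_nonneg.2 ht)]

lemma rho_eq_arcosh : rho h α = Real.arcosh (phi h α) := rfl

lemma cosh_rho (hd : 0 < 1 - 4 * h ^ 2) (hα0 : 0 ≤ α) (hα : α ≤ 2 * h) :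
    cosh (rho h α) = phi h α :=
  Real.cosh_arcosh (one_le_phi hd hα0 hα)

lemma rho_nonneg (hd : 0 < 1 - 4 * h ^ 2) (hα0 : 0 ≤ α) (hα : α ≤ 2 * h) : 0 ≤ rho h α :=
  Real.arcosh_nonneg (one_le_phi hd hα0 hα)

lemma rho_pos (hd : 0 < 1 - 4 * h ^ 2) (hα0 : 0 ≤ α) (hα : α < 2 * h) : 0 < rho h α :=
  Real.arcosh_pos (one_lt_phi hd hα0 hα)

lemma rho_two_mul (hd : 0 < 1 - 4 * h ^ 2) : rho h (2 * h) = 0 := by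
  rw [rho_eq_arcosh, phi_two_mul hd, Real.arcosh_zero]

end Algebra

lemma div_sqrt_sub_sq_lt {x y A : ℝ} (hx : 0 ≤ x) (hxy : x < y) (hyA : y ^ 2 < A) :
    x / √(A - x ^ 2) < y / √(A - y ^ 2) :=
  div_lt_div₀ hxy (Real.sqrt_le_sqrt (by nlinarith)) (hx.trans hxy.le)
    (Real.sqrt_pos.2 (by linarith))

/-- The integrand of `HH` after the substitution `t = cosh w`. -/
noncomputable def coshIntegrand (h α t : ℝ) : ℝ :=
  (2 * h * t - α) / √(t ^ 2 - 1) / √(t ^ 2 - 1 - (2 * h * t - α) ^ 2)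

section Integrand

variable {h α : ℝ}

lemma uu_eq_coshIntegrand_mul_sinh {w : ℝ} (hw : 0 < w) :
    uu h α w = coshIntegrand h α (cosh w) * sinh w := by
  have hs := Real.sinh_pos_iff.2 hw
  rw [uu, coshIntegrand, ← Real.sinh_sq, Real.sqrt_sq hs.le, neg_add_eq_sub, div_div,
    div_mul_eq_mul_div, mul_comm (sinh w), mul_div_mul_right _ _ hs.ne']

lemma sinh_sq_sub_sq (w : ℝ) :
    sinh w ^ 2 - (-α + 2 * h * cosh w) ^ 2 = cosh w ^ 2 - 1 - (2 * h * cosh w - α) ^ 2 := by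
  rw [Real.sinh_sq]
  ring

lemma quadratic_pos (hd : 0 < 1 - 4 * h ^ 2) {t : ℝ} (ht : phi h α < t) :
    0 < t ^ 2 - 1 - (2 * h * t - α) ^ 2 := by
  rw [quadratic_eq_mul hd]
  exact mul_pos hd (mul_pos (sub_pos.2 ht) (sub_pos.2 ((bb_lt_phi hd).trans ht)))

lemma phi_lt_cosh (hd : 0 < 1 - 4 * h ^ 2) (hα0 : 0 ≤ α) (hα : α ≤ 2 * h) {w : ℝ}
    (hw : rho h α < w) : phi h α < cosh w := by
  have hR := rho_nonneg hd hα0 hα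
  rw [← cosh_rho hd hα0 hα]
  exact Real.cosh_strictMonoOn hR (hR.trans hw.le) hw

lemma uu_pos (hd : 0 < 1 - 4 * h ^ 2) (hα0 : 0 < α) (hα : α ≤ 2 * h) {w : ℝ}
    (hw : rho h α < w) : 0 < uu h α w := by
  have hc := phi_lt_cosh hd hα0.le hα hw
  have hD := quadratic_pos hd hc
  rw [← sinh_sq_sub_sq] at hD
  refine div_pos ?_ (Real.sqrt_pos.2 hD)
  nlinarith [le_two_mul_mul_phi hd hα0.le hα, mul_pos (by linarith : 0 < h) (sub_pos.2 hc)]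

lemma uu_two_mul_lt_uu (hd : 0 < 1 - 4 * h ^ 2) (hα0 : 0 < α) (hα : α < 2 * h) {w : ℝ}
    (hw : rho h α < w) : uu h (2 * h) w < uu h α w := by
  have hD := quadratic_pos hd (phi_lt_cosh hd hα0.le hα.le hw)
  rw [← sinh_sq_sub_sq] at hD
  have hc := Real.one_le_cosh w
  exact div_sqrt_sub_sq_lt (by nlinarith) (by linarith) (by linarith)

lemma coshIntegrand_nonneg {t : ℝ} (ht : α ≤ 2 * h * t) : 0 ≤ coshIntegrand h α t :=
  div_nonneg (div_nonneg (sub_nonneg.2 ht) (Real.sqrt_nonneg _)) (Real.sqrt_nonneg _)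

lemma coshIntegrand_le (hd : 0 < 1 - 4 * h ^ 2) (hα0 : 0 ≤ α) (hα : α ≤ 2 * h) {t : ℝ}
    (ht : phi h α < t) :
    coshIntegrand h α t ≤
      (√((1 - 4 * h ^ 2) * (phi h α - bb h α)))⁻¹ * (t - phi h α) ^ (-(1 / 2) : ℝ) := by
  have hK : 0 < (1 - 4 * h ^ 2) * (phi h α - bb h α) := mul_pos hd (sub_pos.2 (bb_lt_phi hd))
  have hQ := quadratic_pos hd ht
  have hnum := sub_nonneg.2 (le_two_mul_mul_of_phi_le hd hα0 hα ht.le)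
  -- Since the quadratic is positive, `(2ht - α)² ≤ t² - 1`.
  have hratio : (2 * h * t - α) / √(t ^ 2 - 1) ≤ 1 :=
    div_le_one_of_le₀ ((Real.le_sqrt hnum (by nlinarith)).2 (by linarith)) (Real.sqrt_nonneg _)
  have hQ_ge : (1 - 4 * h ^ 2) * (phi h α - bb h α) * (t - phi h α)
      ≤ t ^ 2 - 1 - (2 * h * t - α) ^ 2 := by
    rw [quadratic_eq_mul hd]
    have := bb_lt_phi (α := α) hd
    nlinarith [mul_nonneg hd.le (mul_nonneg (sub_nonneg.2 ht.le) (sub_nonneg.2 ht.le))]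
  calc coshIntegrand h α t ≤ 1 / √(t ^ 2 - 1 - (2 * h * t - α) ^ 2) :=
        div_le_div_of_nonneg_right hratio (Real.sqrt_nonneg _)
    _ ≤ 1 / √((1 - 4 * h ^ 2) * (phi h α - bb h α) * (t - phi h α)) :=
        one_div_le_one_div_of_le (Real.sqrt_pos.2 (mul_pos hK (sub_pos.2 ht)))
          (Real.sqrt_le_sqrt hQ_ge)
    _ = _ := by
        rw [Real.sqrt_mul hK.le, one_div, mul_inv, Real.sqrt_eq_rpow (t - _),
          ← Real.rpow_neg (sub_nonneg.2 ht.le)]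

lemma intervalIntegrable_coshIntegrand (hd : 0 < 1 - 4 * h ^ 2) (hα0 : 0 ≤ α) (hα : α ≤ 2 * h)
    {C : ℝ} (hC : phi h α ≤ C) : IntervalIntegrable (coshIntegrand h α) volume (phi h α) C := by
  have hrpow := (intervalIntegral.intervalIntegrable_rpow' (a := 0) (b := C - phi h α)
    (r := -(1 / 2)) (by norm_num)).comp_sub_right (phi h α)
  rw [zero_add, sub_add_cancel] at hrpow
  have hbound := hrpow.const_mul (√((1 - 4 * h ^ 2) * (phi h α - bb h α)))⁻¹
  refine hbound.mono_fun
    (show Measurable (coshIntegrand h α) by unfold coshIntegrand; fun_prop).aestronglyMeasurable ?_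
  rw [uIoc_of_le hC]
  refine (ae_restrict_mem measurableSet_Ioc).mono fun t ht => ?_
  have hle := coshIntegrand_le hd hα0 hα ht.1
  have hnonneg := coshIntegrand_nonneg (le_two_mul_mul_of_phi_le hd hα0 hα ht.1.le)
  dsimp only
  rwa [Real.norm_of_nonneg hnonneg, Real.norm_of_nonneg (hnonneg.trans hle)]

end Integrand

section Profile

variable {h α : ℝ}

lemma integral_uu_eq_integral_coshIntegrand {a b : ℝ} (ha : 0 ≤ a) (hab : a ≤ b) :
    ∫ w in a..b, uu h α w = ∫ t in cosh a..cosh b, coshIntegrand h α t := by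
  rw [← intervalIntegral.integral_comp_mul_deriv_of_deriv_nonneg Real.continuous_cosh.continuousOn
    (fun x _ => Real.hasDerivAt_cosh x)
    (fun x hx => Real.sinh_nonneg_iff.2 ((le_min ha (ha.trans hab)).trans hx.1.le))]
  refine intervalIntegral.integral_congr_ae (.of_forall fun w hw => ?_)
  rw [uIoc_of_le hab] at hw
  exact uu_eq_coshIntegrand_mul_sinh (ha.trans_lt hw.1)

lemma intervalIntegrable_uu_iff {a b : ℝ} (ha : 0 ≤ a) (hab : a ≤ b) :
    IntervalIntegrable (uu h α) volume a b ↔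
      IntervalIntegrable (coshIntegrand h α) volume (cosh a) (cosh b) := by
  rw [← intervalIntegral.integrable_comp_mul_deriv_iff_of_deriv_nonneg
    Real.continuous_cosh.continuousOn (fun x _ => Real.hasDerivAt_cosh x)
    (fun x hx => Real.sinh_nonneg_iff.2 ((le_min ha (ha.trans hab)).trans hx.1.le))]
  refine intervalIntegrable_congr fun w hw => ?_
  rw [uIoc_of_le hab] at hw
  exact uu_eq_coshIntegrand_mul_sinh (ha.trans_lt hw.1)

lemma intervalIntegrable_uu (hd : 0 < 1 - 4 * h ^ 2) (hα0 : 0 ≤ α) (hα : α ≤ 2 * h) {x : ℝ}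
    (hx : rho h α ≤ x) : IntervalIntegrable (uu h α) volume (rho h α) x := by
  rw [intervalIntegrable_uu_iff (rho_nonneg hd hα0 hα) hx, cosh_rho hd hα0 hα]
  refine intervalIntegrable_coshIntegrand hd hα0 hα ?_
  have hR := rho_nonneg hd hα0 hα
  rw [← cosh_rho hd hα0 hα]
  exact (Real.cosh_strictMonoOn.le_iff_le hR (hR.trans hx)).2 hx

lemma HH_eq_integral_coshIntegrand (hd : 0 < 1 - 4 * h ^ 2) (hα0 : 0 ≤ α) (hα : α ≤ 2 * h)
    {ρ : ℝ} (hρ : rho h α ≤ ρ) : HH h α ρ = ∫ t in phi h α..cosh ρ, coshIntegrand h α t := by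
  rw [HH, integral_uu_eq_integral_coshIntegrand (rho_nonneg hd hα0 hα) hρ, cosh_rho hd hα0 hα]

lemma HH_two_mul_eq_integral_coshIntegrand (hd : 0 < 1 - 4 * h ^ 2) {ρ : ℝ} (hρ : 0 ≤ ρ) :
    HH h (2 * h) ρ = ∫ t in (1 : ℝ)..cosh ρ, coshIntegrand h (2 * h) t := by
  rw [HH, rho_two_mul hd, integral_uu_eq_integral_coshIntegrand le_rfl hρ, Real.cosh_zero]

lemma intervalIntegrable_coshIntegrand_two_mul (hd : 0 < 1 - 4 * h ^ 2) (h0 : 0 ≤ h) {C : ℝ}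
    (hC : 1 ≤ C) : IntervalIntegrable (coshIntegrand h (2 * h)) volume 1 C := by
  have := intervalIntegrable_coshIntegrand (α := 2 * h) hd (by linarith) le_rfl (C := C)
    (by rwa [phi_two_mul hd])
  rwa [phi_two_mul hd] at this

lemma HH_sub_HH (hd : 0 < 1 - 4 * h ^ 2) (hα0 : 0 ≤ α) (hα : α ≤ 2 * h) {x y : ℝ}
    (hx : rho h α ≤ x) (hy : rho h α ≤ y) : HH h α y - HH h α x = ∫ w in x..y, uu h α w :=
  intervalIntegral.integral_interval_sub_left (intervalIntegrable_uu hd hα0 hα hy)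
    (intervalIntegrable_uu hd hα0 hα hx)

lemma continuousOn_HH (hd : 0 < 1 - 4 * h ^ 2) (hα0 : 0 ≤ α) (hα : α ≤ 2 * h) {X : ℝ}
    (hX : rho h α ≤ X) : ContinuousOn (HH h α) (Icc (rho h α) X) := by
  have := intervalIntegral.continuousOn_primitive_interval' (intervalIntegrable_uu hd hα0 hα hX)
    left_mem_uIcc
  rwa [uIcc_of_le hX] at this

end Profile

noncomputable def affineReparam (h α τ : ℝ) : ℝ := lam h α * τ + (phi h α - lam h α)

section Comparison

variable {h α : ℝ}

lemma quadratic_affineReparam (hd : 0 < 1 - 4 * h ^ 2) (τ : ℝ) :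
    affineReparam h α τ ^ 2 - 1 - (2 * h * affineReparam h α τ - α) ^ 2
      = lam h α ^ 2 * (τ ^ 2 - 1 - (2 * h * τ - 2 * h) ^ 2) := by
  have hb : bb h α = phi h α - 2 * lam h α / (1 - 4 * h ^ 2) := by
    linarith [phi_sub_bb (h := h) (α := α)]
  rw [quadratic_eq_mul hd, quadratic_eq_mul (α := 2 * h) hd, phi_two_mul hd, bb_two_mul, hb,
    affineReparam]
  field_simp
  ring

lemma phi_lt_affineReparam (hd : 0 < 1 - 4 * h ^ 2) {τ : ℝ} (hτ : 1 < τ) :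
    phi h α < affineReparam h α τ := by
  rw [affineReparam]
  nlinarith [lam_pos (α := α) hd]

lemma sq_mul_le_sq_mul_affineReparam (hd : 0 < 1 - 4 * h ^ 2) (hα0 : 0 ≤ α) (hα : α ≤ 2 * h)
    {τ : ℝ} (hτ : 1 ≤ τ) :
    (2 * h * τ - 2 * h) ^ 2 * (affineReparam h α τ ^ 2 - 1)
      ≤ (2 * h * affineReparam h α τ - α) ^ 2 * (τ ^ 2 - 1) := by
  have hL := lam_pos (α := α) hd
  have hLα := sub_nonneg.2 (le_two_mul_mul_lam hd hα0 hα)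
  set L := lam h α
  set f := phi h α
  -- Expanded in powers of `τ - 1`, the difference has three nonnegative coefficients.
  have hexpand : (2 * h * (L * τ + (f - L)) - α) ^ 2 * (τ ^ 2 - 1)
        - (2 * h * τ - 2 * h) ^ 2 * ((L * τ + (f - L)) ^ 2 - 1)
      = 4 * h * L * (2 * h * L - α) * (τ - 1) ^ 3
        + ((16 * h ^ 2 * L - 4 * h * α) * f - 8 * h * L * α + α ^ 2 + 4 * h ^ 2) * (τ - 1) ^ 2
        + 2 * (2 * h * f - α) ^ 2 * (τ - 1) := by ring
  have hc2 : ((16 * h ^ 2 * L - 4 * h * α) * f - 8 * h * L * α + α ^ 2 + 4 * h ^ 2)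
        * (1 - 4 * h ^ 2)
      = 2 * ((2 * h) ^ 2 - α ^ 2) * (1 - 4 * h ^ 2) + 3 * (2 * h * L - α) ^ 2 := by
    linear_combination
      (16 * h ^ 2 * L - 4 * h * α) * mul_phi (α := α) hd + 4 * h ^ 2 * lam_sq (α := α) hd
  have hc2_nonneg :
      0 ≤ (16 * h ^ 2 * L - 4 * h * α) * f - 8 * h * L * α + α ^ 2 + 4 * h ^ 2 := by
    refine nonneg_of_mul_nonneg_left (hc2 ▸ ?_) hd
    have : α ^ 2 ≤ (2 * h) ^ 2 := pow_le_pow_left₀ hα0 hα 2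
    nlinarith [sq_nonneg (2 * h * L - α)]
  have h0 : 0 ≤ h := by linarith
  have hτ1 := sub_nonneg.2 hτ
  unfold affineReparam
  nlinarith [mul_nonneg (mul_nonneg (mul_nonneg h0 hL.le) hLα) (pow_nonneg hτ1 3),
    mul_nonneg hc2_nonneg (sq_nonneg (τ - 1)), mul_nonneg (sq_nonneg (2 * h * f - α)) hτ1]

lemma coshIntegrand_two_mul_le (hd : 0 < 1 - 4 * h ^ 2) (hα0 : 0 ≤ α) (hα : α ≤ 2 * h)
    {τ : ℝ} (hτ : 1 < τ) :
    coshIntegrand h (2 * h) τ ≤ coshIntegrand h α (affineReparam h α τ) * lam h α := by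
  have hL := lam_pos (α := α) hd
  have hs := phi_lt_affineReparam (α := α) hd hτ
  have hs1 : 1 < affineReparam h α τ := (one_le_phi hd hα0 hα).trans_lt hs
  have hratio : (2 * h * τ - 2 * h) / √(τ ^ 2 - 1)
      ≤ (2 * h * affineReparam h α τ - α) / √(affineReparam h α τ ^ 2 - 1) := by
    have hτ' : 0 ≤ 2 * h * τ - 2 * h := by nlinarith
    have hs' := sub_nonneg.2 (le_two_mul_mul_of_phi_le hd hα0 hα hs.le)
    rw [div_le_div_iff₀ (Real.sqrt_pos.2 (by nlinarith)) (Real.sqrt_pos.2 (by nlinarith))]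
    refine (pow_le_pow_iff_left₀ (by positivity) (by positivity) two_ne_zero).1 ?_
    rw [mul_pow, mul_pow, Real.sq_sqrt (by nlinarith), Real.sq_sqrt (by nlinarith)]
    exact sq_mul_le_sq_mul_affineReparam hd hα0 hα hτ.le
  rw [coshIntegrand, coshIntegrand, quadratic_affineReparam hd, Real.sqrt_mul (sq_nonneg _),
    Real.sqrt_sq hL.le, div_mul_eq_mul_div, mul_comm (lam h α) (√_), mul_div_mul_right _ _ hL.ne']
  exact div_le_div_of_nonneg_right hratio (Real.sqrt_nonneg _)

lemma exists_affineReparam_le_self (hα0 : 0 ≤ α) (hα : α < 2 * h) :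
    ∃ T, 1 < T ∧ affineReparam h α T ≤ T := by
  have hL1 := sub_pos.2 (lam_lt_one hα0 hα)
  refine ⟨max 1 ((phi h α - lam h α) / (1 - lam h α)) + 1,
    (le_max_left _ _).trans_lt (lt_add_one _), ?_⟩
  have := (le_max_right 1 ((phi h α - lam h α) / (1 - lam h α))).trans
    (le_add_of_nonneg_right zero_le_one)
  rw [div_le_iff₀ hL1] at this
  rw [affineReparam]
  nlinarith

lemma affineReparam_one : affineReparam h α 1 = phi h α := by
  rw [affineReparam]
  ring

lemma hasDerivAt_affineReparam (τ : ℝ) : HasDerivAt (affineReparam h α) (lam h α) τ := by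
  have := ((hasDerivAt_id' τ).const_mul (lam h α)).add_const (phi h α - lam h α)
  rw [mul_one] at this
  exact this

lemma integral_coshIntegrand_affineReparam (hd : 0 < 1 - 4 * h ^ 2) (a b : ℝ) :
    ∫ τ in a..b, coshIntegrand h α (affineReparam h α τ) * lam h α
      = ∫ t in affineReparam h α a..affineReparam h α b, coshIntegrand h α t :=
  intervalIntegral.integral_comp_mul_deriv_of_deriv_nonneg (g := coshIntegrand h α)
    (fun τ _ => (hasDerivAt_affineReparam τ).continuousAt.continuousWithinAt)
    (fun τ _ => hasDerivAt_affineReparam τ) (fun _ _ => (lam_pos hd).le)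

lemma intervalIntegrable_coshIntegrand_affineReparam_iff (hd : 0 < 1 - 4 * h ^ 2) (a b : ℝ) :
    IntervalIntegrable (fun τ => coshIntegrand h α (affineReparam h α τ) * lam h α) volume a b ↔
      IntervalIntegrable (coshIntegrand h α) volume (affineReparam h α a) (affineReparam h α b) :=
  intervalIntegral.integrable_comp_mul_deriv_iff_of_deriv_nonneg (g := coshIntegrand h α)
    (fun τ _ => (hasDerivAt_affineReparam τ).continuousAt.continuousWithinAt)
    (fun τ _ => hasDerivAt_affineReparam τ) (fun _ _ => (lam_pos hd).le)

lemma exists_HH_two_mul_le_HH (hd : 0 < 1 - 4 * h ^ 2) (hα0 : 0 ≤ α) (hα : α < 2 * h) :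
    ∃ X, rho h α < X ∧ HH h (2 * h) X ≤ HH h α X := by
  have h0 : 0 ≤ h := by linarith
  obtain ⟨T, hT1, hCT⟩ := exists_affineReparam_le_self hα0 hα
  set C := affineReparam h α T
  have hφC : phi h α < C := phi_lt_affineReparam hd hT1
  have hφ1 := one_le_phi hd hα0 hα.le
  have hC1 : 1 ≤ C := hφ1.trans hφC.le
  have hρX : rho h α < Real.arcosh C :=
    (Real.arcosh_lt_arcosh (by linarith) (by linarith)).2 hφC
  have hintT : IntervalIntegrable (fun τ => coshIntegrand h α (affineReparam h α τ) * lam h α)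
      volume 1 T := by
    rw [intervalIntegrable_coshIntegrand_affineReparam_iff hd, affineReparam_one]
    exact intervalIntegrable_coshIntegrand hd hα0 hα.le hφC.le
  refine ⟨Real.arcosh C, hρX, ?_⟩
  calc HH h (2 * h) (Real.arcosh C) = ∫ τ in (1 : ℝ)..C, coshIntegrand h (2 * h) τ := by
        rw [HH_two_mul_eq_integral_coshIntegrand hd (Real.arcosh_nonneg hC1),
          Real.cosh_arcosh hC1]
    _ ≤ ∫ τ in (1 : ℝ)..C, coshIntegrand h α (affineReparam h α τ) * lam h α :=
        intervalIntegral.integral_mono_on_of_le_Ioo hC1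
          (intervalIntegrable_coshIntegrand_two_mul hd h0 hC1)
          (hintT.mono_set (by
            rw [uIcc_of_le hC1, uIcc_of_le hT1.le]
            exact Icc_subset_Icc le_rfl hCT))
          (fun τ hτ => coshIntegrand_two_mul_le hd hα0 hα.le hτ.1)
    _ ≤ ∫ τ in (1 : ℝ)..T, coshIntegrand h α (affineReparam h α τ) * lam h α := by
        refine intervalIntegral.integral_mono_interval le_rfl hC1 hCT ?_ hintT
        refine (ae_restrict_mem measurableSet_Ioc).mono fun τ hτ => ?_
        have hs := phi_lt_affineReparam (α := α) hd hτ.1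
        exact mul_nonneg (coshIntegrand_nonneg (le_two_mul_mul_of_phi_le hd hα0 hα.le hs.le))
          (lam_pos hd).le
    _ = HH h α (Real.arcosh C) := by
        rw [integral_coshIntegrand_affineReparam hd, affineReparam_one,
          HH_eq_integral_coshIntegrand hd hα0 hα.le hρX.le, Real.cosh_arcosh hC1]

end Comparison

lemma exists_sign_change_of_strictMonoOn {f : ℝ → ℝ} {a b : ℝ} (hab : a ≤ b)
    (hmono : StrictMonoOn f (Ici a)) (hcont : ContinuousOn f (Icc a b)) (ha : f a < 0)
    (hb : 0 ≤ f b) :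
    ∃ c, a < c ∧ (∀ x ∈ Ico a c, f x < 0) ∧ f c = 0 ∧ ∀ x, c < x → 0 < f x := by
  obtain ⟨c, hc, hfc⟩ := intermediate_value_Icc hab hcont ⟨ha.le, hb⟩
  have hac : a < c := hc.1.lt_of_ne (by rintro rfl; linarith)
  refine ⟨c, hac, fun x hx => hfc ▸ hmono hx.1 hc.1 hx.2, hfc, fun x hx => ?_⟩
  exact hfc ▸ hmono (mem_Ici.2 hc.1) (mem_Ici.2 (hc.1.trans hx.le)) hx

section Intersection

variable {h α : ℝ}

lemma strictMonoOn_HH_sub_HH_two_mul (hd : 0 < 1 - 4 * h ^ 2) (hα0 : 0 < α) (hα : α < 2 * h) :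
    StrictMonoOn (fun ρ => HH h α ρ - HH h (2 * h) ρ) (Ici (rho h α)) := by
  intro x hx y hy hxy
  have hR := rho_nonneg hd hα0.le hα.le
  have h2h : (0 : ℝ) ≤ 2 * h := by linarith
  have hR2 : rho h (2 * h) ≤ rho h α := rho_two_mul hd ▸ hR
  have hint : IntervalIntegrable (uu h α) volume x y :=
    (intervalIntegrable_uu hd hα0.le hα.le hx).symm.trans (intervalIntegrable_uu hd hα0.le hα.le hy)
  have hint2 : IntervalIntegrable (uu h (2 * h)) volume x y :=
    (intervalIntegrable_uu hd h2h le_rfl (hR2.trans hx)).symm.trans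
      (intervalIntegrable_uu hd h2h le_rfl (hR2.trans hy))
  have hpos : 0 < ∫ w in x..y, (uu h α w - uu h (2 * h) w) :=
    intervalIntegral.intervalIntegral_pos_of_pos_on (hint.sub hint2)
      (fun w hw => sub_pos.2 (uu_two_mul_lt_uu hd hα0 hα (lt_of_le_of_lt hx hw.1))) hxy
  rw [intervalIntegral.integral_sub hint hint2, ← HH_sub_HH hd hα0.le hα.le hx hy,
    ← HH_sub_HH hd h2h le_rfl (hR2.trans hx) (hR2.trans hy)] at hpos
  dsimp only
  linarith

lemma HH_lt_HH_two_mul_rho (hd : 0 < 1 - 4 * h ^ 2) (hα0 : 0 < α) (hα : α < 2 * h) :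
    HH h α (rho h α) < HH h (2 * h) (rho h α) := by
  have hR := rho_pos hd hα0.le hα
  have h2h : (0 : ℝ) < 2 * h := by linarith
  have hR2 : rho h (2 * h) ≤ rho h α := rho_two_mul hd ▸ hR.le
  rw [HH, intervalIntegral.integral_same, HH, rho_two_mul hd]
  refine intervalIntegral.intervalIntegral_pos_of_pos_on
    (rho_two_mul hd ▸ intervalIntegrable_uu hd h2h.le le_rfl hR2) (fun w hw => ?_) hR
  exact uu_pos hd h2h le_rfl (rho_two_mul hd ▸ hw.1)

lemma continuousOn_HH_sub_HH_two_mul (hd : 0 < 1 - 4 * h ^ 2) (hα0 : 0 ≤ α) (hα : α ≤ 2 * h)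
    {X : ℝ} (hX : rho h α ≤ X) :
    ContinuousOn (fun ρ => HH h α ρ - HH h (2 * h) ρ) (Icc (rho h α) X) := by
  have hR := rho_nonneg hd hα0 hα
  have hR2 : rho h (2 * h) ≤ rho h α := rho_two_mul hd ▸ hR
  exact (continuousOn_HH hd hα0 hα hX).sub
    ((continuousOn_HH hd (by linarith) le_rfl (hR2.trans hX)).mono (Icc_subset_Icc hR2 le_rfl))

end Intersection

/-- for α ∈ (0, 2h), the graphs of H_α^h and of the entire graph
S^h = H_{2h}^h intersect in exactly one circle ρ = ρ*: H_α^h < S^h before ρ*,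
they agree at ρ*, and H_α^h > S^h after ρ*. -/
theorem stmt_16 (h α : ℝ) (hh : h ∈ Set.Ioo (0 : ℝ) (1 / 2))
    (hα : α ∈ Set.Ioo 0 (2 * h)) :
    ∃ ρstar : ℝ, rho h α < ρstar ∧
      (∀ ρ ∈ Set.Ico (rho h α) ρstar, HH h α ρ < HH h (2 * h) ρ) ∧
      HH h α ρstar = HH h (2 * h) ρstar ∧
      (∀ ρ : ℝ, ρstar < ρ → HH h (2 * h) ρ < HH h α ρ) := by
  obtain ⟨h0, h1⟩ := hh
  obtain ⟨hα0, hα2⟩ := hα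
  have hd : 0 < 1 - 4 * h ^ 2 := by nlinarith
  obtain ⟨X, hX, hle⟩ := exists_HH_two_mul_le_HH hd hα0.le hα2
  obtain ⟨ρstar, hρ, hbelow, hzero, habove⟩ := exists_sign_change_of_strictMonoOn hX.le
    (strictMonoOn_HH_sub_HH_two_mul hd hα0 hα2)
    (continuousOn_HH_sub_HH_two_mul hd hα0.le hα2.le hX.le)
    (sub_neg.2 (HH_lt_HH_two_mul_rho hd hα0 hα2)) (sub_nonneg.2 hle)
  exact ⟨ρstar, hρ, fun ρ hρ' => sub_neg.1 (hbelow ρ hρ'), sub_eq_zero.1 hzero,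
    fun ρ hρ' => sub_pos.1 (habove ρ hρ')⟩
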